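/- Aggregated rankings of indifference regions sharing a border line are one adjacent swap apart. Precisely: let λ ∈ Λ and let a ≠ b be items such that v^λ_a = v^λ_b while v^λ_c ≠ v^λ_d for every other unordered pair {c,d} ≠ {a,b} of distinct items. If π and π' are two distinct permutations of the items such that λ lies in the closure of the strict indifference region Λ°(π) and also in the closure of Λ°(π'), then π' is obtained from π by composing with the transposition that exchanges a and b (so the two rankings differ by exactly one swap of the adjacent items a and b). -/
import Mathlib


/-- The aggregated score of item `i` under weight `l`. -/
noncomputable def aggScore {n : ℕ} (v : Fin 3 → Fin n → ℝ) (l : Fin 3 → ℝ)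
    (i : Fin n) : ℝ := ∑ j, l j * v j i

/-- The strict indifference region `Λ°(π)`: weights in the standard 2-simplex
whose aggregated scores are strictly increasing along the permutation `π`. -/
noncomputable def strictRegion {n : ℕ} (v : Fin 3 → Fin n → ℝ)
    (π : Equiv.Perm (Fin n)) : Set (Fin 3 → ℝ) :=
  {l | l ∈ stdSimplex ℝ (Fin 3) ∧ StrictMono fun i : Fin n => aggScore v l (π i)}

lemma aggScore_continuous {n : ℕ} (v : Fin 3 → Fin n → ℝ) (i : Fin n) :
    Continuous fun l : Fin 3 → ℝ => aggScore v l i := by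
  unfold aggScore
  exact continuous_finset_sum _ fun j _ => (continuous_apply j).mul continuous_const

lemma monotone_of_mem_closure {n : ℕ} (v : Fin 3 → Fin n → ℝ)
    (π : Equiv.Perm (Fin n)) (l : Fin 3 → ℝ)
    (h : l ∈ closure (strictRegion v π)) :
    Monotone fun i : Fin n => aggScore v l (π i) := by
  intro i j hij
  have hsub : strictRegion v π ⊆
      {l | aggScore v l (π i) ≤ aggScore v l (π j)} := fun m hm =>
    (hm.2.monotone hij : _)
  have hcl : IsClosed {l : Fin 3 → ℝ | aggScore v l (π i) ≤ aggScore v l (π j)} :=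
    isClosed_le (aggScore_continuous v (π i)) (aggScore_continuous v (π j))
  exact closure_minimal hsub hcl h

/-- Neighboring indifference regions sharing a border line are one
adjacent swap apart.  If `l ∈ Λ` ties exactly the pair of distinct items
`a, b` (all other pairs of distinct items have distinct aggregated scores),
and `l` lies in the closures of the strict indifference regions of two
distinct permutations `π` and `π'`, then `π'` is obtained from `π` by
composing with the transposition exchanging items `a` and `b`. -/
theorem neighboring_regions_one_swap (n : ℕ) (v : Fin 3 → Fin n → ℝ)
    (l : Fin 3 → ℝ) (hl : l ∈ stdSimplex ℝ (Fin 3)) (a b : Fin n) (hab : a ≠ b)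
    (htie : aggScore v l a = aggScore v l b)
    (hother : ∀ c d : Fin n, c ≠ d → ({c, d} : Set (Fin n)) ≠ {a, b} →
      aggScore v l c ≠ aggScore v l d)
    (π π' : Equiv.Perm (Fin n)) (hne : π ≠ π')
    (hπ : l ∈ closure (strictRegion v π)) (hπ' : l ∈ closure (strictRegion v π')) :
    π' = π.trans (Equiv.swap a b) := by
  set w : Fin n → ℝ := aggScore v l with hw
  have hm : Monotone (w ∘ π) := monotone_of_mem_closure v π l hπ
  have hm' : Monotone (w ∘ π') := monotone_of_mem_closure v π' l hπ'
  have heq : w ∘ π = w ∘ π' := by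
    rw [Tuple.comp_sort_eq_comp_iff_monotone.mpr hm,
        Tuple.comp_sort_eq_comp_iff_monotone.mpr hm']
  have hval : ∀ i, w (π i) = w (π' i) := fun i => congrFun heq i
  -- for each i, either π' i = π i or the pair {π i, π' i} is {a, b}
  have hpair : ∀ i, π' i = π i ∨ ({π i, π' i} : Set (Fin n)) = {a, b} := by
    intro i
    by_cases h : π' i = π i
    · exact Or.inl h
    · right
      by_contra hne2
      exact hother (π i) (π' i) (fun h2 => h (h2.symm)) hne2 (hval i)
  set ia := π.symm a with hia
  set ib := π.symm b with hib
  have hpia : π ia = a := π.apply_symm_apply a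
  have hpib : π ib = b := π.apply_symm_apply b
  have hiaib : ia ≠ ib := fun h => hab (by rw [← hpia, ← hpib, h])
  -- any i other than ia, ib has π' i = π i
  have hfix : ∀ i, i ≠ ia → i ≠ ib → π' i = π i := by
    intro i h1 h2
    rcases hpair i with h | h
    · exact h
    · exfalso
      have : π i ∈ ({a, b} : Set (Fin n)) := h ▸ Set.mem_insert _ _
      rcases this with h3 | h3
      · exact h1 (by rw [hia, ← h3, Equiv.symm_apply_apply])
      · exact h2 (by rw [hib, ← h3, Equiv.symm_apply_apply])
  -- find the swapped positions
  obtain ⟨i0, hi0⟩ : ∃ i, π' i ≠ π i := by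
    by_contra h
    push_neg at h
    exact hne (Equiv.ext fun i => (h i).symm)
  have hi0mem : i0 = ia ∨ i0 = ib := by
    by_contra h
    push_neg at h
    exact hi0 (hfix i0 h.1 h.2)
  have hswap : π' ia = b ∧ π' ib = a := by
    have key : ∀ i, π' i ≠ π i → (π i = a ∧ π' i = b) ∨ (π i = b ∧ π' i = a) := by
      intro i h
      rcases hpair i with h1 | h1
      · exact absurd h1 h
      · rcases Set.pair_eq_pair_iff.mp h1 with ⟨h2, h3⟩ | ⟨h2, h3⟩
        · exact Or.inl ⟨h2, h3⟩
        · exact Or.inr ⟨h2, h3⟩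
    rcases hi0mem with h0 | h0
    · rw [h0] at hi0
      rcases key ia hi0 with ⟨h1, h2⟩ | ⟨h1, h2⟩
      · -- π' ia = b; deduce π' ib = a
        refine ⟨h2, ?_⟩
        have h3 : π' ib ≠ π ib := by
          rw [hpib]
          intro h4
          exact hiaib (π'.injective (h4.trans h2.symm)).symm
        rcases key ib h3 with ⟨h4, h5⟩ | ⟨h4, h5⟩
        · exact absurd (hpib.symm.trans h4) hab.symm
        · exact h5
      · exact absurd (hpia.symm.trans h1) hab
    · rw [h0] at hi0
      rcases key ib hi0 with ⟨h1, h2⟩ | ⟨h1, h2⟩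
      · exact absurd (hpib.symm.trans h1) hab.symm
      · refine ⟨?_, h2⟩
        have h3 : π' ia ≠ π ia := by
          rw [hpia]
          intro h4
          exact hiaib (π'.injective (h4.trans h2.symm))
        rcases key ia h3 with ⟨h4, h5⟩ | ⟨h4, h5⟩
        · exact h5
        · exact absurd (hpia.symm.trans h4) hab
  ext i
  simp only [Equiv.trans_apply]
  by_cases h1 : i = ia
  · subst h1
    rw [hpia, Equiv.swap_apply_left, hswap.1]
  by_cases h2 : i = ib
  · subst h2
    rw [hpib, Equiv.swap_apply_right, hswap.2]
  · rw [hfix i h1 h2, Equiv.swap_apply_of_ne_of_ne]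
    · intro h; exact h1 (by rw [hia, ← h, Equiv.symm_apply_apply])
    · intro h; exact h2 (by rw [hib, ← h, Equiv.symm_apply_apply])
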